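/- Let T ∈ M_{m,loc}(Z) and φ ∈ Lip(Z, Z') a Lipschitz map such that preimages of bounded sets are bounded. Then the push-forward φ_# T, defined by (φ_# T)(f,π) := T(f∘φ, π∘φ), satisfies ‖φ_# T‖(B) ≤ Lip(φ)^m · (φ_# ‖T‖)(B) for every Borel set B ⊂ Z', where φ_#‖T‖(B) = ‖T‖(φ^{-1}(B)). -/

import Mathlib

open Metric Filter MeasureTheory ENNReal Bornology Topology

variable {Z : Type*} [MetricSpace Z]

/-- Bounded-support Lipschitz real functions. -/
def LipBS {Z : Type*} [MetricSpace Z] (f : Z → ℝ) : Prop :=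
  (∃ K : NNReal, LipschitzWith K f) ∧ IsBounded (tsupport f)

/-- Functions Lipschitz on bounded subsets. -/
def LipLoc {Z : Type*} [MetricSpace Z] (f : Z → ℝ) : Prop :=
  ∀ s : Set Z, IsBounded s → ∃ K : NNReal, LipschitzOnWith K f s

/-- Multilinearity of a functional on `Lip_bs(Z) × Lip_loc(Z)^m`. -/
def IsMultilinearFunctional {Z : Type*} [MetricSpace Z] {m : ℕ}
    (T : (Z → ℝ) → (Fin m → Z → ℝ) → ℝ) : Prop :=
  (∀ f g π, LipBS f → LipBS g → (∀ i, LipLoc (π i)) →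
      T (f + g) π = T f π + T g π) ∧
  (∀ (c : ℝ) f π, LipBS f → (∀ i, LipLoc (π i)) → T (c • f) π = c * T f π) ∧
  (∀ f π (i : Fin m) (g g' : Z → ℝ), LipBS f → (∀ j, LipLoc (π j)) → LipLoc g → LipLoc g' →
      T f (Function.update π i (g + g')) =
        T f (Function.update π i g) + T f (Function.update π i g')) ∧
  (∀ f π (i : Fin m) (c : ℝ) (g : Z → ℝ), LipBS f → (∀ j, LipLoc (π j)) → LipLoc g →
      T f (Function.update π i (c • g)) = c * T f (Function.update π i g))

/-- Metric functional: multilinear, continuous and local (Definition 2.1). -/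
def IsMetricFunctional {Z : Type*} [MetricSpace Z] {m : ℕ}
    (T : (Z → ℝ) → (Fin m → Z → ℝ) → ℝ) : Prop :=
  IsMultilinearFunctional T ∧
  (∀ f (π : Fin m → Z → ℝ) (πj : ℕ → Fin m → Z → ℝ),
      LipBS f → (∀ i, LipLoc (π i)) → (∀ j i, LipLoc (πj j i)) →
      (∀ i z, Tendsto (fun j => πj j i z) atTop (𝓝 (π i z))) →
      (∀ s : Set Z, IsBounded s → ∃ K : NNReal, ∀ i j, LipschitzOnWith K (πj j i) s) →
      Tendsto (fun j => T f (πj j)) atTop (𝓝 (T f π))) ∧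
  (∀ f π, LipBS f → (∀ i, LipLoc (π i)) →
      (∃ i : Fin m, ∃ δ : ℝ, 0 < δ ∧ ∀ z w : Z,
        infDist z (tsupport f) ≤ δ → infDist w (tsupport f) ≤ δ → π i z = π i w) →
      T f π = 0)

/-- The mass of `T` in a set `V`. -/
noncomputable def massIn {Z : Type*} [MetricSpace Z] {m : ℕ}
    (T : (Z → ℝ) → (Fin m → Z → ℝ) → ℝ) (V : Set Z) : ℝ≥0∞ :=
  ⨆ p : {q : (n : ℕ) × (Fin n → (Z → ℝ) × (Fin m → Z → ℝ)) //
      (∀ i, LipBS (q.2 i).1 ∧ tsupport (q.2 i).1 ⊆ V ∧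
        ∀ k, LipschitzWith 1 ((q.2 i).2 k)) ∧
      (∀ z, (∑ i : Fin q.1, |(q.2 i).1 z|) ≤ 1)},
    ENNReal.ofReal (∑ i : Fin p.1.1, T ((p.1.2 i).1) ((p.1.2 i).2))

/-- The outer measure `‖T‖`. -/
noncomputable def normT {Z : Type*} [MetricSpace Z] {m : ℕ}
    (T : (Z → ℝ) → (Fin m → Z → ℝ) → ℝ) (A : Set Z) : ℝ≥0∞ :=
  ⨅ (V : Set Z) (_ : IsOpen V ∧ A ⊆ V), massIn T V

/-- Finite mass on bounded sets, concentrated near compact sets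
(membership condition for `M_{m,loc}(Z)`). -/
def MlocCond {Z : Type*} [MetricSpace Z] {m : ℕ}
    (T : (Z → ℝ) → (Fin m → Z → ℝ) → ℝ) : Prop :=
  ∀ U : Set Z, IsOpen U → IsBounded U → ∀ ε : ℝ, 0 < ε →
    ∃ C : Set Z, IsCompact C ∧ C ⊆ U ∧ massIn T U < ⊤ ∧
      massIn T (U \ C) < ENNReal.ofReal ε

/-!
The outer measure `‖T‖` is metric. Countable subadditivity of the mass on open sets `V i` comes
from the `M_loc` condition: all but `ε` of the mass of a test family sits near a compact set,
which finitely many `V i` cover, and splitting the test functions along a Lipschitz partition of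
unity subordinate to these `V i` and the complement of the compact set distributes the family
over them. Additivity on separated sets comes from concatenating test families with disjoint
supports. So `φ_#‖T‖` is a Borel measure on `Z'`; it is finite on balls since preimages of
bounded sets are bounded, hence outer regular.

For open `W`, a test family for `φ_# T` in `W` pulls back to one for `T` in `φ⁻¹ W` after the
`1`-Lipschitz arguments `π ∘ φ` are divided by `Lip(φ)`, which multilinearity pays for with the
factor `Lip(φ)^m`. Outer regularity carries this bound from open to Borel sets.
-/

open Set Function
open scoped NNReal

section Lipschitz

variable {X : Type*} [PseudoMetricSpace X]

theorem LipschitzWith.mul_of_abs_le_one {f g : X → ℝ} {Kf Kg : ℝ≥0} (hf : LipschitzWith Kf f)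
    (hg : LipschitzWith Kg g) (hf1 : ∀ x, |f x| ≤ 1) (hg1 : ∀ x, |g x| ≤ 1) :
    LipschitzWith (Kf + Kg) fun x => f x * g x := by
  refine LipschitzWith.of_dist_le_mul fun x y => ?_
  have hfxy := hf.dist_le_mul x y
  have hgxy := hg.dist_le_mul x y
  rw [Real.dist_eq] at hfxy hgxy ⊢
  calc |f x * g x - f y * g y| = |f x * (g x - g y) + (f x - f y) * g y| := by ring_nf
    _ ≤ |f x| * |g x - g y| + |f x - f y| * |g y| := by
      rw [← abs_mul, ← abs_mul]; exact abs_add_le _ _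
    _ ≤ 1 * (Kg * dist x y) + Kf * dist x y * 1 := by
      gcongr
      exacts [hf1 x, hg1 y]
    _ = (Kf + Kg) * dist x y := by ring

theorem lipschitzWith_finset_prod_of_abs_le_one {ι : Type*} {s : Finset ι} {f : ι → X → ℝ}
    {K : ι → ℝ≥0} (hf : ∀ i ∈ s, LipschitzWith (K i) (f i)) (hf1 : ∀ i ∈ s, ∀ x, |f i x| ≤ 1) :
    LipschitzWith (∑ i ∈ s, K i) fun x => ∏ i ∈ s, f i x := by
  classical
  induction s using Finset.induction_on with
  | empty => simp
  | insert a s ha ih =>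
    simp only [Finset.prod_insert ha, Finset.sum_insert ha]
    refine (hf a (s.mem_insert_self a)).mul_of_abs_le_one
      (ih (fun i hi => hf i (Finset.mem_insert_of_mem hi))
        fun i hi => hf1 i (Finset.mem_insert_of_mem hi))
      (hf1 a (s.mem_insert_self a)) fun x => ?_
    rw [Finset.abs_prod]
    exact Finset.prod_le_one (fun _ _ => abs_nonneg _)
      fun i hi => hf1 i (Finset.mem_insert_of_mem hi) x

theorem IsCompact.exists_lipschitz_bumps {ι : Type*} {C : Set X} (hC : IsCompact C)
    {V : ι → Set X} (hV : ∀ i, IsOpen (V i)) (hCV : C ⊆ ⋃ i, V i) :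
    ∃ (s : Finset ι) (g : ι → X → ℝ) (O : Set X), IsOpen O ∧ C ⊆ O ∧
      (∀ i, ∃ K, LipschitzWith K (g i)) ∧ (∀ i x, g i x ∈ Icc 0 1) ∧
      (∀ i, tsupport (g i) ⊆ V i) ∧ ∀ x ∈ O, ∃ i ∈ s, g i x = 1 := by
  obtain ⟨δ, hδ, hball⟩ := lebesgue_number_lemma_of_metric hC hV hCV
  set A : ι → Set X := fun i => {y | ball y (δ / 2) ⊆ V i}
  have hCA : C ⊆ ⋃ i, interior (A i) := fun x hx => by
    obtain ⟨i, hi⟩ := hball x hx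
    refine mem_iUnion.2 ⟨i, interior_maximal (fun y hy => ?_) isOpen_ball
      (mem_ball_self (half_pos hδ))⟩
    exact (ball_subset_ball' (by linarith [mem_ball.1 hy])).trans hi
  obtain ⟨s, hs⟩ := hC.elim_finite_subcover _ (fun i => isOpen_interior) hCA
  have hδ4 : 0 < δ / 4 := by positivity
  refine ⟨s, fun i x => thickenedIndicator hδ4 (A i) x, ⋃ i ∈ s, interior (A i),
    isOpen_biUnion fun i _ => isOpen_interior, hs,
    fun i => ⟨_, isometry_subtype_coe.lipschitz.comp (lipschitzWith_thickenedIndicator hδ4 _)⟩,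
    fun i x => ⟨(thickenedIndicator hδ4 (A i) x).2, by
      exact_mod_cast thickenedIndicator_le_one hδ4 (A i) x⟩, fun i => ?_, fun x hx => ?_⟩
  · have hsupp : support (fun x => (thickenedIndicator hδ4 (A i) x : ℝ)) ⊆
        thickening (δ / 4) (A i) := fun x hx => by
      by_contra hxA
      exact hx (by simp [thickenedIndicator_zero hδ4 (A i) hxA])
    refine (closure_mono hsupp).trans <| (closure_thickening_subset_cthickening _ _).trans <|
      (cthickening_subset_thickening' (half_pos hδ) (by linarith) _).trans fun y hy => ?_
    obtain ⟨a, ha, hya⟩ := mem_thickening_iff.1 hy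
    exact ha hya
  · obtain ⟨i, hi, hxi⟩ := mem_iUnion₂.1 hx
    exact ⟨i, hi, by simp [thickenedIndicator_one hδ4 _ (interior_subset hxi)]⟩

/-- The index `none` stands for the open set `Cᶜ`. -/
theorem IsCompact.exists_lipschitz_partitionOfUnity {ι : Type*} [LinearOrder ι] {C : Set X}
    (hC : IsCompact C) {V : ι → Set X} (hV : ∀ i, IsOpen (V i)) (hCV : C ⊆ ⋃ i, V i) :
    ∃ (s : Finset ι) (σ : Option ι → X → ℝ), (∀ o, ∃ K, LipschitzWith K (σ o)) ∧
      (∀ o x, 0 ≤ σ o x) ∧ (∀ x, ∑ o ∈ s.insertNone, σ o x = 1) ∧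
      (∀ i, tsupport (σ (some i)) ⊆ V i) ∧ tsupport (σ none) ⊆ Cᶜ := by
  obtain ⟨s, g, O, hO, hCO, hg, hg01, hgV, hgO⟩ := hC.exists_lipschitz_bumps hV hCV
  choose K hK using hg
  have hg1 : ∀ i x, |g i x| ≤ 1 := fun i x => abs_le.2 ⟨by linarith [(hg01 i x).1], (hg01 i x).2⟩
  have hcg1 : ∀ i x, |1 - g i x| ≤ 1 := fun i x =>
    abs_le.2 ⟨by linarith [(hg01 i x).2], by linarith [(hg01 i x).1]⟩
  have hcgK : ∀ i, LipschitzWith (0 + K i) fun x => 1 - g i x :=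
    fun i => (LipschitzWith.const 1).sub (hK i)
  let P : Finset ι → X → ℝ := fun t x => ∏ j ∈ t, (1 - g j x)
  have hPK : ∀ t, ∃ K, LipschitzWith K (P t) := fun t =>
    ⟨_, lipschitzWith_finset_prod_of_abs_le_one (fun i _ => hcgK i) fun i _ => hcg1 i⟩
  have hP1 : ∀ t x, |P t x| ≤ 1 := fun t x => by
    rw [Finset.abs_prod]
    exact Finset.prod_le_one (fun _ _ => abs_nonneg _) fun i _ => hcg1 i x
  have hP0 : ∀ t x, 0 ≤ P t x := fun t x =>
    Finset.prod_nonneg fun i _ => by linarith [(hg01 i x).2]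
  refine ⟨s, fun o x => o.elim (P s x) fun i => g i x * P {j ∈ s | j < i} x, ?_, ?_, ?_, ?_, ?_⟩
  · rintro (_ | i)
    exacts [hPK s, ⟨_, (hK i).mul_of_abs_le_one (hPK _).choose_spec (hg1 i) (hP1 _)⟩]
  · rintro (_ | i) x
    exacts [hP0 s x, mul_nonneg (hg01 i x).1 (hP0 _ x)]
  · intro x
    simp only [Finset.sum_insertNone, Option.elim, P]
    rw [Finset.prod_one_sub_ordered]
    ring
  · exact fun i => tsupport_mul_subset_left.trans (hgV i)
  · intro x hx hxC
    refine notMem_tsupport_iff_eventuallyEq.2 ?_ hx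
    filter_upwards [hO.mem_nhds (hCO hxC)] with y hy
    obtain ⟨i, hi, hgi⟩ := hgO y hy
    exact Finset.prod_eq_zero hi (by simp [hgi])

end Lipschitz

theorem ENNReal.ofReal_sum_le {ι : Type*} (s : Finset ι) (f : ι → ℝ) :
    ENNReal.ofReal (∑ i ∈ s, f i) ≤ ∑ i ∈ s, ENNReal.ofReal (f i) := by
  classical
  induction s using Finset.induction_on with
  | empty => simp
  | insert a s ha ih =>
    rw [Finset.sum_insert ha, Finset.sum_insert ha]
    exact ENNReal.ofReal_add_le.trans (by gcongr)

theorem MeasureTheory.Measure.OuterRegular.of_measure_ball_ne_top {X : Type*}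
    [PseudoMetricSpace X] [MeasurableSpace X] [BorelSpace X] {μ : Measure X}
    (h : ∀ x (r : ℝ), μ (ball x r) ≠ ∞) : μ.OuterRegular := by
  rcases isEmpty_or_nonempty X with _ | ⟨⟨x₀⟩⟩
  · exact ⟨fun A _ r hr => ⟨A, subset_rfl, A.eq_empty_of_isEmpty ▸ isOpen_empty, hr⟩⟩
  · have (n : ℕ) : IsFiniteMeasure (μ.restrict (ball x₀ n)) := isFiniteMeasure_restrict.2 (h _ _)
    exact .of_restrict (s := fun n : ℕ => ball x₀ n) (fun n => inferInstance)
      (fun n => isOpen_ball) (iUnion_ball_nat x₀).ge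

theorem Metric.AreSeparated.exists_isOpen_disjoint {X : Type*} [PseudoEMetricSpace X]
    {s t : Set X} (h : AreSeparated s t) :
    ∃ U V, IsOpen U ∧ IsOpen V ∧ s ⊆ U ∧ t ⊆ V ∧ Disjoint U V := by
  obtain ⟨r, hr, hst⟩ := h
  refine ⟨⋃ x ∈ s, eball x (r / 2), ⋃ y ∈ t, eball y (r / 2),
    isOpen_biUnion fun _ _ => isOpen_eball, isOpen_biUnion fun _ _ => isOpen_eball,
    fun x hx => mem_biUnion hx (mem_eball_self (ENNReal.half_pos hr)),
    fun y hy => mem_biUnion hy (mem_eball_self (ENNReal.half_pos hr)),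
    disjoint_left.2 fun z hz hz' => ?_⟩
  obtain ⟨x, hx, hzx⟩ := mem_iUnion₂.1 hz
  obtain ⟨y, hy, hzy⟩ := mem_iUnion₂.1 hz'
  refine (hst x hx y hy).not_gt ?_
  calc edist x y ≤ edist z x + edist z y := edist_triangle_left x y z
    _ < r / 2 + r / 2 := ENNReal.add_lt_add hzx hzy
    _ = r := ENNReal.add_halves r

section LipschitzClasses

variable {Z' : Type*} [MetricSpace Z']

theorem lipBS_zero : LipBS (0 : Z → ℝ) := ⟨⟨0, LipschitzWith.const 0⟩, by simp⟩

theorem LipBS.add {f g : Z → ℝ} (hf : LipBS f) (hg : LipBS g) : LipBS (f + g) := by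
  obtain ⟨⟨Kf, hKf⟩, hfb⟩ := hf
  obtain ⟨⟨Kg, hKg⟩, hgb⟩ := hg
  exact ⟨⟨Kf + Kg, hKf.add hKg⟩, (hfb.union hgb).subset (tsupport_add f g)⟩

theorem lipBS_finset_sum {ι : Type*} {s : Finset ι} {f : ι → Z → ℝ} (hf : ∀ i ∈ s, LipBS (f i)) :
    LipBS (∑ i ∈ s, f i) :=
  Finset.sum_induction _ LipBS (fun _ _ => LipBS.add) lipBS_zero hf

theorem LipBS.mul_of_abs_le_one {f g : Z → ℝ} {K : ℝ≥0} (hf : LipBS f) (hf1 : ∀ z, |f z| ≤ 1)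
    (hg : LipschitzWith K g) (hg1 : ∀ z, |g z| ≤ 1) : LipBS (f * g) := by
  obtain ⟨⟨Kf, hKf⟩, hfb⟩ := hf
  exact ⟨⟨_, hKf.mul_of_abs_le_one hg hf1 hg1⟩, hfb.subset tsupport_mul_subset_left⟩

theorem LipBS.comp {f : Z' → ℝ} {φ : Z → Z'} {L : ℝ≥0} (hf : LipBS f) (hφ : LipschitzWith L φ)
    (hprop : ∀ A : Set Z', IsBounded A → IsBounded (φ ⁻¹' A)) : LipBS (f ∘ φ) := by
  obtain ⟨⟨Kf, hKf⟩, hfb⟩ := hf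
  exact ⟨⟨_, hKf.comp hφ⟩, (hprop _ hfb).subset (tsupport_comp_subset_preimage f hφ.continuous)⟩

theorem LipschitzWith.lipLoc {f : Z → ℝ} {K : ℝ≥0} (hf : LipschitzWith K f) : LipLoc f :=
  fun _ _ => ⟨K, hf.lipschitzOnWith⟩

theorem LipLoc.const_smul {f : Z → ℝ} (hf : LipLoc f) (c : ℝ) : LipLoc (c • f) :=
  fun s hs =>
    let ⟨_, hK⟩ := hf s hs
    ⟨_, (lipschitzWith_smul c).comp_lipschitzOnWith hK⟩

end LipschitzClasses

namespace IsMetricFunctional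

variable {m : ℕ} {T : (Z → ℝ) → (Fin m → Z → ℝ) → ℝ}

theorem map_zero (hT : IsMetricFunctional T) {π : Fin m → Z → ℝ} (hπ : ∀ i, LipLoc (π i)) :
    T 0 π = 0 := by
  simpa using hT.1.2.1 0 0 π lipBS_zero hπ

theorem map_sum (hT : IsMetricFunctional T) {ι : Type*} {s : Finset ι} {f : ι → Z → ℝ}
    (hf : ∀ i ∈ s, LipBS (f i)) {π : Fin m → Z → ℝ} (hπ : ∀ i, LipLoc (π i)) :
    T (∑ i ∈ s, f i) π = ∑ i ∈ s, T (f i) π := by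
  classical
  induction s using Finset.induction_on with
  | empty => simpa using hT.map_zero hπ
  | insert a s ha ih =>
    have hs : ∀ i ∈ s, LipBS (f i) := fun i hi => hf i (Finset.mem_insert_of_mem hi)
    rw [Finset.sum_insert ha, Finset.sum_insert ha,
      hT.1.1 _ _ π (hf a (s.mem_insert_self a)) (lipBS_finset_sum hs) hπ, ih hs]

theorem map_piecewise_smul (hT : IsMetricFunctional T) {f : Z → ℝ} (hf : LipBS f) (c : ℝ)
    {π : Fin m → Z → ℝ} (hπ : ∀ i, LipLoc (π i)) (s : Finset (Fin m)) :
    T f (s.piecewise (c • π) π) = c ^ s.card * T f π := by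
  induction s using Finset.induction_on with
  | empty => simp
  | insert a s ha ih =>
    have hloc : ∀ i, LipLoc (s.piecewise (c • π) π i) := fun i => by
      by_cases hi : i ∈ s
      · simpa [hi] using (hπ i).const_smul c
      · simpa [hi] using hπ i
    rw [Finset.piecewise_insert, Pi.smul_apply, hT.1.2.2.2 f _ a c (π a) hf hloc (hπ a),
      update_eq_self_iff.2 (s.piecewise_eq_of_notMem _ _ ha).symm, ih,
      Finset.card_insert_of_notMem ha, pow_succ]
    ring

theorem map_smul_pow (hT : IsMetricFunctional T) {f : Z → ℝ} (hf : LipBS f) (c : ℝ)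
    {π : Fin m → Z → ℝ} (hπ : ∀ i, LipLoc (π i)) : T f (c • π) = c ^ m * T f π := by
  simpa using hT.map_piecewise_smul hf c hπ Finset.univ

end IsMetricFunctional

section Mass

variable {m n : ℕ} {T : (Z → ℝ) → (Fin m → Z → ℝ) → ℝ} {V W : Set Z}

def IsMassTest (V : Set Z) (F : Fin n → (Z → ℝ) × (Fin m → Z → ℝ)) : Prop :=
  (∀ i, LipBS (F i).1 ∧ tsupport (F i).1 ⊆ V ∧ ∀ k, LipschitzWith 1 ((F i).2 k)) ∧
    ∀ z, ∑ i, |(F i).1 z| ≤ 1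

theorem le_massIn (T : (Z → ℝ) → (Fin m → Z → ℝ) → ℝ) {F : Fin n → (Z → ℝ) × (Fin m → Z → ℝ)}
    (hF : IsMassTest V F) : ENNReal.ofReal (∑ i, T (F i).1 (F i).2) ≤ massIn T V :=
  le_iSup_of_le ⟨⟨n, F⟩, hF⟩ le_rfl

theorem massIn_le {c : ℝ≥0∞}
    (h : ∀ n (F : Fin n → (Z → ℝ) × (Fin m → Z → ℝ)), IsMassTest V F →
      ENNReal.ofReal (∑ i, T (F i).1 (F i).2) ≤ c) :
    massIn T V ≤ c :=
  iSup_le fun p => h _ _ p.2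

namespace IsMassTest

variable {F : Fin n → (Z → ℝ) × (Fin m → Z → ℝ)}

theorem elim0 (V : Set Z) : IsMassTest V (Fin.elim0 : Fin 0 → (Z → ℝ) × (Fin m → Z → ℝ)) :=
  ⟨fun i => i.elim0, fun z => by simp⟩

theorem mono (hF : IsMassTest V F) (hVW : V ⊆ W) : IsMassTest W F :=
  ⟨fun i => ⟨(hF.1 i).1, (hF.1 i).2.1.trans hVW, (hF.1 i).2.2⟩, hF.2⟩

theorem abs_le_one (hF : IsMassTest V F) (i : Fin n) (z : Z) : |(F i).1 z| ≤ 1 :=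
  (Finset.single_le_sum (fun j _ => abs_nonneg ((F j).1 z)) (Finset.mem_univ i)).trans (hF.2 z)

theorem apply_eq_zero (hF : IsMassTest V F) {z : Z} (hz : z ∉ V) (i : Fin n) : (F i).1 z = 0 :=
  image_eq_zero_of_notMem_tsupport fun h => hz ((hF.1 i).2.1 h)

theorem mul (hF : IsMassTest V F) {h : Z → ℝ} {K : ℝ≥0} (hh : LipschitzWith K h)
    (h1 : ∀ z, |h z| ≤ 1) (hW : ∀ i, tsupport (F i).1 ∩ tsupport h ⊆ W) :
    IsMassTest W fun i => ((F i).1 * h, (F i).2) := by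
  refine ⟨fun i => ⟨(hF.1 i).1.mul_of_abs_le_one (hF.abs_le_one i) hh h1,
    (subset_inter tsupport_mul_subset_left tsupport_mul_subset_right).trans (hW i),
    (hF.1 i).2.2⟩, fun z => ?_⟩
  simp only [Pi.mul_apply, abs_mul, ← Finset.sum_mul]
  exact mul_le_one₀ (hF.2 z) (abs_nonneg _) (h1 z)

theorem append {n' : ℕ} {G : Fin n' → (Z → ℝ) × (Fin m → Z → ℝ)} (hd : Disjoint V W)
    (hF : IsMassTest V F) (hG : IsMassTest W G) : IsMassTest (V ∪ W) (Fin.append F G) := by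
  constructor
  · exact Fin.addCases
      (fun i => by simpa only [Fin.append_left] using (hF.mono subset_union_left).1 i)
      fun i => by simpa only [Fin.append_right] using (hG.mono subset_union_right).1 i
  intro z
  rw [Fin.sum_univ_add]
  simp only [Fin.append_left, Fin.append_right]
  by_cases hz : z ∈ V
  · simpa [hG.apply_eq_zero (disjoint_left.1 hd hz)] using hF.2 z
  · simpa [hF.apply_eq_zero hz] using hG.2 z

end IsMassTest

theorem massIn_mono (T : (Z → ℝ) → (Fin m → Z → ℝ) → ℝ) (hVW : V ⊆ W) :
    massIn T V ≤ massIn T W :=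
  massIn_le fun _ _ hF => le_massIn T (hF.mono hVW)

theorem massIn_empty (hT : IsMetricFunctional T) : massIn T (∅ : Set Z) = 0 := by
  refine le_antisymm (massIn_le fun n F hF => ?_) bot_le
  have hF0 : ∀ i, (F i).1 = 0 := fun i => funext fun z => hF.apply_eq_zero (notMem_empty z) i
  simp [hF0, hT.map_zero fun k => ((hF.1 _).2.2 k).lipLoc]

theorem add_massIn_le_massIn_union (T : (Z → ℝ) → (Fin m → Z → ℝ) → ℝ) (hd : Disjoint V W) :
    massIn T V + massIn T W ≤ massIn T (V ∪ W) := by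
  refine @ENNReal.iSup_add_iSup_le _ _ _ _ ⟨⟨⟨0, Fin.elim0⟩, IsMassTest.elim0 V⟩⟩
    ⟨⟨⟨0, Fin.elim0⟩, IsMassTest.elim0 W⟩⟩ _ fun ⟨⟨n, F⟩, hF⟩ ⟨⟨n', G⟩, hG⟩ => ?_
  rcases le_or_gt (∑ i, T (F i).1 (F i).2) 0 with hFs | hFs
  · rw [ENNReal.ofReal_of_nonpos hFs, zero_add]
    exact le_massIn T (IsMassTest.mono hG subset_union_right)
  rcases le_or_gt (∑ i, T (G i).1 (G i).2) 0 with hGs | hGs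
  · rw [ENNReal.ofReal_of_nonpos hGs, add_zero]
    exact le_massIn T (IsMassTest.mono hF subset_union_left)
  rw [← ENNReal.ofReal_add hFs.le hGs.le]
  convert le_massIn T (IsMassTest.append hd hF hG) using 2
  simp [Fin.sum_univ_add]

theorem normT_le_massIn (T : (Z → ℝ) → (Fin m → Z → ℝ) → ℝ) {A : Set Z} (hV : IsOpen V)
    (hAV : A ⊆ V) : normT T A ≤ massIn T V :=
  iInf₂_le V ⟨hV, hAV⟩

theorem normT_eq_massIn (hV : IsOpen V) : normT T V = massIn T V :=
  le_antisymm (normT_le_massIn T hV subset_rfl) (le_iInf₂ fun _ hW => massIn_mono T hW.2)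

theorem normT_lt_top (hTloc : MlocCond T) {A : Set Z} (hA : IsBounded A) : normT T A < ∞ := by
  obtain ⟨-, -, -, hfin, -⟩ := hTloc (thickening 1 A) isOpen_thickening hA.thickening 1 one_pos
  exact (normT_le_massIn T isOpen_thickening (self_subset_thickening one_pos A)).trans_lt hfin

theorem add_normT_le_normT_union (T : (Z → ℝ) → (Fin m → Z → ℝ) → ℝ) {s t : Set Z}
    (hst : AreSeparated s t) : normT T s + normT T t ≤ normT T (s ∪ t) := by
  obtain ⟨U₁, U₂, hU₁, hU₂, hsU, htU, hU⟩ := hst.exists_isOpen_disjoint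
  refine le_iInf₂ fun V hV => ?_
  calc normT T s + normT T t ≤ massIn T (V ∩ U₁) + massIn T (V ∩ U₂) :=
        add_le_add
          (normT_le_massIn T (hV.1.inter hU₁) (subset_inter (subset_union_left.trans hV.2) hsU))
          (normT_le_massIn T (hV.1.inter hU₂) (subset_inter (subset_union_right.trans hV.2) htU))
    _ ≤ massIn T (V ∩ U₁ ∪ V ∩ U₂) :=
        add_massIn_le_massIn_union T (hU.mono inter_subset_right inter_subset_right)
    _ ≤ massIn T V := massIn_mono T (union_subset inter_subset_left inter_subset_left)

end Mass

section MassMeasure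

variable {m n : ℕ} {T : (Z → ℝ) → (Fin m → Z → ℝ) → ℝ}

theorem IsMassTest.ofReal_sum_le_sum_massIn (hT : IsMetricFunctional T) {V : Set Z}
    {F : Fin n → (Z → ℝ) × (Fin m → Z → ℝ)} (hF : IsMassTest V F) {ι : Type*} {s : Finset ι}
    {σ : ι → Z → ℝ} (hσ : ∀ i, ∃ K, LipschitzWith K (σ i)) (hσ0 : ∀ i z, 0 ≤ σ i z)
    (hσ1 : ∀ z, ∑ i ∈ s, σ i z = 1) {W : ι → Set Z}
    (hW : ∀ i j, tsupport (F j).1 ∩ tsupport (σ i) ⊆ W i) :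
    ENNReal.ofReal (∑ j, T (F j).1 (F j).2) ≤ ∑ i ∈ s, massIn T (W i) := by
  have hσle : ∀ i ∈ s, ∀ z, |σ i z| ≤ 1 := fun i hi z => by
    rw [abs_of_nonneg (hσ0 i z), ← hσ1 z]
    exact Finset.single_le_sum (fun j _ => hσ0 j z) hi
  have hpiece : ∀ i ∈ s, IsMassTest (W i) fun j => ((F j).1 * σ i, (F j).2) := fun i hi =>
    hF.mul (hσ i).choose_spec (hσle i hi) fun j => hW i j
  have hsplit : ∀ j, T (F j).1 (F j).2 = ∑ i ∈ s, T ((F j).1 * σ i) (F j).2 := fun j => by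
    have hdecomp : (F j).1 = ∑ i ∈ s, (F j).1 * σ i := by
      ext z
      simp [Finset.sum_apply, ← Finset.mul_sum, hσ1]
    exact (congrArg (T · (F j).2) hdecomp).trans
      (hT.map_sum (fun i hi => ((hpiece i hi).1 j).1) fun k => ((hF.1 j).2.2 k).lipLoc)
  calc ENNReal.ofReal (∑ j, T (F j).1 (F j).2)
      = ENNReal.ofReal (∑ i ∈ s, ∑ j, T ((F j).1 * σ i) (F j).2) := by
        rw [Finset.sum_congr rfl fun j _ => hsplit j, Finset.sum_comm]
    _ ≤ ∑ i ∈ s, ENNReal.ofReal (∑ j, T ((F j).1 * σ i) (F j).2) := ENNReal.ofReal_sum_le _ _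
    _ ≤ ∑ i ∈ s, massIn T (W i) := Finset.sum_le_sum fun i hi => le_massIn T (hpiece i hi)

theorem massIn_iUnion_le (hT : IsMetricFunctional T) (hTloc : MlocCond T) {V : ℕ → Set Z}
    (hV : ∀ i, IsOpen (V i)) : massIn T (⋃ i, V i) ≤ ∑' i, massIn T (V i) := by
  refine massIn_le fun n F hF => ENNReal.le_of_forall_pos_le_add fun ε hε _ => ?_
  set K := ⋃ j, tsupport (F j).1
  obtain ⟨C, hC, -, -, hCε⟩ := hTloc (thickening 1 K) isOpen_thickening
    (isBounded_iUnion.2 fun j => (hF.1 j).1.2).thickening ε (NNReal.coe_pos.2 hε)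
  -- only the part of `C` near the supports has to be covered by the `V i`
  have hCK : IsCompact (C ∩ K) :=
    hC.inter_right (isClosed_iUnion_of_finite fun j => isClosed_tsupport _)
  obtain ⟨s, σ, hσ, hσ0, hσ1, hσV, hσC⟩ := hCK.exists_lipschitz_partitionOfUnity hV
    fun z hz => iUnion_subset (fun j => (hF.1 j).2.1) hz.2
  calc ENNReal.ofReal (∑ j, T (F j).1 (F j).2)
      ≤ ∑ o ∈ s.insertNone, massIn T (o.elim (thickening 1 K \ C) V) :=
        hF.ofReal_sum_le_sum_massIn hT hσ hσ0 hσ1 ?_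
    _ = massIn T (thickening 1 K \ C) + ∑ i ∈ s, massIn T (V i) := Finset.sum_insertNone _ _
    _ ≤ ε + ∑' i, massIn T (V i) := by
        gcongr
        · exact hCε.le.trans ENNReal.ofReal_coe_nnreal.le
        · exact ENNReal.sum_le_tsum s
    _ = ∑' i, massIn T (V i) + ε := add_comm _ _
  rintro (_ | i) j
  · rintro z ⟨hzF, hzσ⟩
    exact ⟨self_subset_thickening one_pos K (mem_iUnion.2 ⟨j, hzF⟩),
      fun hzC => hσC hzσ ⟨hzC, mem_iUnion.2 ⟨j, hzF⟩⟩⟩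
  · exact inter_subset_right.trans (hσV i)

noncomputable def massOuterMeasure (hT : IsMetricFunctional T) : OuterMeasure Z :=
  inducedOuterMeasure (fun V (_ : IsOpen V) => massIn T V) isOpen_empty (massIn_empty hT)

theorem massOuterMeasure_apply (hT : IsMetricFunctional T) (hTloc : MlocCond T) (A : Set Z) :
    massOuterMeasure hT A = normT T A := by
  rw [massOuterMeasure, inducedOuterMeasure_eq_iInf (fun _ => isOpen_iUnion)
    (fun _ hV => massIn_iUnion_le hT hTloc hV) (fun _ _ _ _ h => massIn_mono T h), normT]
  simp only [iInf_and]

theorem isMetric_massOuterMeasure (hT : IsMetricFunctional T) (hTloc : MlocCond T) :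
    (massOuterMeasure hT).IsMetric := fun s t hst => by
  refine le_antisymm (measure_union_le s t) ?_
  simp only [massOuterMeasure_apply hT hTloc]
  exact add_normT_le_normT_union T hst

noncomputable def massMeasure [MeasurableSpace Z] [BorelSpace Z] (hT : IsMetricFunctional T)
    (hTloc : MlocCond T) : Measure Z :=
  (massOuterMeasure hT).toMeasure
    (BorelSpace.measurable_eq.trans_le (isMetric_massOuterMeasure hT hTloc).borel_le_caratheodory)

theorem massMeasure_apply [MeasurableSpace Z] [BorelSpace Z] (hT : IsMetricFunctional T)
    (hTloc : MlocCond T) {A : Set Z} (hA : MeasurableSet A) :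
    massMeasure hT hTloc A = normT T A := by
  rw [massMeasure, toMeasure_apply _ _ hA, massOuterMeasure_apply hT hTloc]

end MassMeasure

section Pushforward

variable {Z' : Type*} [MetricSpace Z'] {m n : ℕ} {T : (Z → ℝ) → (Fin m → Z → ℝ) → ℝ}
  {φ : Z → Z'} {L : ℝ≥0}

def pushforwardFunctional (φ : Z → Z') (T : (Z → ℝ) → (Fin m → Z → ℝ) → ℝ) :
    (Z' → ℝ) → (Fin m → Z' → ℝ) → ℝ :=
  fun f π => T (f ∘ φ) fun i => π i ∘ φ

theorem IsMassTest.comp_lipschitzWith {W : Set Z'} {F : Fin n → (Z' → ℝ) × (Fin m → Z' → ℝ)}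
    (hF : IsMassTest W F) (hφ : LipschitzWith L φ) (hL : L ≠ 0)
    (hprop : ∀ A : Set Z', IsBounded A → IsBounded (φ ⁻¹' A)) :
    IsMassTest (φ ⁻¹' W) fun j => ((F j).1 ∘ φ, (L⁻¹ : ℝ) • fun k => (F j).2 k ∘ φ) := by
  refine ⟨fun j => ⟨(hF.1 j).1.comp hφ hprop,
    (tsupport_comp_subset_preimage _ hφ.continuous).trans (preimage_mono (hF.1 j).2.1),
    fun k => ?_⟩, fun z => hF.2 (φ z)⟩
  have hLL : ‖(L : ℝ)⁻¹‖₊ * (1 * L) = 1 := by simp [hL]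
  have h := (lipschitzWith_smul (L⁻¹ : ℝ)).comp (((hF.1 j).2.2 k).comp hφ)
  rw [hLL] at h
  exact h

theorem massIn_pushforwardFunctional_le_of_ne_zero (hT : IsMetricFunctional T)
    (hφ : LipschitzWith L φ) (hL : L ≠ 0)
    (hprop : ∀ A : Set Z', IsBounded A → IsBounded (φ ⁻¹' A)) (W : Set Z') :
    massIn (pushforwardFunctional φ T) W ≤ L ^ m * massIn T (φ ⁻¹' W) := by
  refine massIn_le fun n F hF => ?_
  have hG := hF.comp_lipschitzWith hφ hL hprop
  -- multilinearity moves the factor `L` out of each of the `m` Lipschitz arguments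
  have hscale : ∀ j, pushforwardFunctional φ T (F j).1 (F j).2 =
      (L : ℝ) ^ m * T ((F j).1 ∘ φ) ((L⁻¹ : ℝ) • fun k => (F j).2 k ∘ φ) := fun j => by
    rw [← hT.map_smul_pow (hG.1 j).1 _ fun k => ((hG.1 j).2.2 k).lipLoc,
      smul_inv_smul₀ (NNReal.coe_ne_zero.2 hL)]
    rfl
  rw [Finset.sum_congr rfl fun j _ => hscale j, ← Finset.mul_sum,
    ENNReal.ofReal_mul (by positivity), ENNReal.ofReal_pow L.coe_nonneg,
    ENNReal.ofReal_coe_nnreal]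
  gcongr
  exact le_massIn T hG

theorem massIn_pushforwardFunctional_le (hT : IsMetricFunctional T) (hφ : LipschitzWith L φ)
    (hprop : ∀ A : Set Z', IsBounded A → IsBounded (φ ⁻¹' A)) (W : Set Z') :
    massIn (pushforwardFunctional φ T) W ≤ L ^ m * massIn T (φ ⁻¹' W) := by
  rcases ne_or_eq L 0 with hL | rfl
  · exact massIn_pushforwardFunctional_le_of_ne_zero hT hφ hL hprop W
  rcases Nat.eq_zero_or_pos m with rfl | hm
  · simpa using massIn_pushforwardFunctional_le_of_ne_zero hT (hφ.weaken zero_le_one) one_ne_zero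
      hprop W
  -- a constant map makes every Lipschitz argument constant, so locality kills each value
  have hφc := (LipschitzWith.zero_iff φ).1 hφ
  refine massIn_le fun n F hF => ?_
  have hzero : ∀ j, pushforwardFunctional φ T (F j).1 (F j).2 = 0 := fun j =>
    hT.2.2 _ _ ((hF.1 j).1.comp hφ hprop) (fun k => (((hF.1 j).2.2 k).comp hφ).lipLoc)
      ⟨⟨0, hm⟩, 1, one_pos, fun z w _ _ => by simp [hφc z w]⟩
  simp [hzero]

end Pushforward

/-- for `T ∈ M_{m,loc}(Z)` and a Lipschitz map `φ : Z → Z'` with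
bounded preimages of bounded sets, the push-forward satisfies
`‖φ_# T‖(B) ≤ Lip(φ)^m · ‖T‖(φ⁻¹(B))` for every Borel set `B ⊆ Z'`. -/
theorem pushforward_mass_bound {Z Z' : Type*} [MetricSpace Z] [MetricSpace Z']
    [MeasurableSpace Z'] [BorelSpace Z'] {m : ℕ}
    (T : (Z → ℝ) → (Fin m → Z → ℝ) → ℝ)
    (hT : IsMetricFunctional T) (hTloc : MlocCond T)
    (φ : Z → Z') (L : NNReal) (hφ : LipschitzWith L φ)
    (hprop : ∀ A : Set Z', IsBounded A → IsBounded (φ ⁻¹' A)) :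
    ∀ B : Set Z', MeasurableSet B →
      normT (fun (f : Z' → ℝ) (π : Fin m → Z' → ℝ) =>
          T (f ∘ φ) (fun i => π i ∘ φ)) B ≤
        (L : ℝ≥0∞) ^ m * normT T (φ ⁻¹' B) := by
  intro B hB
  borelize Z
  set ν := (massMeasure hT hTloc).map φ
  have hν : ∀ A, MeasurableSet A → ν A = normT T (φ ⁻¹' A) := fun A hA => by
    rw [Measure.map_apply hφ.continuous.measurable hA,
      massMeasure_apply hT hTloc (hφ.continuous.measurable hA)]
  have : ν.OuterRegular := .of_measure_ball_ne_top fun x r => by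
    rw [hν _ measurableSet_ball]
    exact (normT_lt_top hTloc (hprop _ isBounded_ball)).ne
  calc normT (pushforwardFunctional φ T) B ≤ ((L ^ m : ℝ≥0) • ν) B := by
        rw [Set.measure_eq_iInf_isOpen]
        refine le_iInf₂ fun W hBW => le_iInf fun hW => ?_
        calc normT (pushforwardFunctional φ T) B
            ≤ massIn (pushforwardFunctional φ T) W := normT_le_massIn _ hW hBW
          _ ≤ L ^ m * massIn T (φ ⁻¹' W) := massIn_pushforwardFunctional_le hT hφ hprop W
          _ = ((L ^ m : ℝ≥0) • ν) W := by
            rw [Measure.smul_apply, hν W hW.measurableSet,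
              normT_eq_massIn (hW.preimage hφ.continuous)]
            simp [ENNReal.smul_def]
    _ = L ^ m * normT T (φ ⁻¹' B) := by
        rw [Measure.smul_apply, hν B hB]
        simp [ENNReal.smul_def]
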